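/- Let Q ∈ M_n(ℝ) be a symmetric matrix and set g(λ) = 2⟨λ, Qλ⟩ − H_n[λ]. Suppose there is no pair (λ, ν) ∈ ℝⁿ × ℝⁿ satisfying simultaneously: (i) 4Qλ − (4/n)·(λ_0 log λ_0, …, λ_{n−1} log λ_{n−1})ᵀ − ν = 0; (ii) 0 < ‖λ‖₂² < n; (iii) λ_j ≥ 0 for all 0 ≤ j ≤ n−1; (iv) λ_j·ν_j = 0 for all 0 ≤ j ≤ n−1; (v) ν_j ≥ 0 for all 0 ≤ j ≤ n−1. Then g(λ) ≥ 0 for every λ ∈ [0,∞)ⁿ with ‖λ‖₂ = 1. -/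

import Mathlib

open scoped BigOperators
open Matrix

/-- Entropy functional `H_n[λ]`. -/
noncomputable def entH (n : ℕ) (l : Fin n → ℝ) : ℝ :=
  (1 / n : ℝ) * ∑ x : Fin n, l x ^ 2 * Real.log (l x ^ 2)
    - ((∑ x : Fin n, l x ^ 2) / n) * Real.log ((∑ x : Fin n, l x ^ 2) / n)

/-!
Suppose `g < 0` somewhere on the positive unit sphere. Minimize `g` on the compact set
`{μ ≥ 0, ‖μ‖² = n}`; by homogeneity (`g (t • x) = t² g x`) the minimum `η` is negative and
`g x - (η / n) ‖x‖² ≥ 0` on the whole orthant, with equality at the minimizer `μ`. The one-sided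
partial derivatives of this function at `μ` are `ν = 4Qμ - (4/n) μ log μ - (2η/n) μ`, with `ν ≥ 0`
and `μ ν = 0`. Rescaling by `exp (η / 2)` absorbs the multiplier term `(2η/n) μ` into the
logarithm, giving a solution of the KKT system with `‖λ‖² = exp η · n ∈ (0, n)`.
-/

open Real Set Function Filter Topology

lemma mul_log_mul (a b : ℝ) : a * b * log (a * b) = b * (a * log a) + a * (b * log b) := by
  have h := negMulLog_mul a b
  simp only [negMulLog] at h
  linear_combination -h

lemma sum_sq_smul {ι : Type*} [Fintype ι] (t : ℝ) (x : ι → ℝ) :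
    ∑ i, (t • x) i ^ 2 = t ^ 2 * ∑ i, x i ^ 2 := by
  simp only [Pi.smul_apply, smul_eq_mul, mul_pow, Finset.mul_sum]

lemma entH_smul (n : ℕ) (t : ℝ) (l : Fin n → ℝ) : entH n (t • l) = t ^ 2 * entH n l := by
  simp only [entH, Pi.smul_apply, smul_eq_mul, mul_pow, mul_log_mul,
    Finset.sum_add_distrib, ← Finset.sum_mul, ← Finset.mul_sum, mul_div_assoc]
  ring

noncomputable def objective {n : ℕ} (Q : Matrix (Fin n) (Fin n) ℝ) (l : Fin n → ℝ) : ℝ :=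
  2 * (l ⬝ᵥ Q *ᵥ l) - entH n l

lemma objective_smul {n : ℕ} (Q : Matrix (Fin n) (Fin n) ℝ) (t : ℝ) (l : Fin n → ℝ) :
    objective Q (t • l) = t ^ 2 * objective Q l := by
  simp only [objective, entH_smul, mulVec_smul, smul_dotProduct, dotProduct_smul, smul_eq_mul]
  ring

lemma continuous_entH (n : ℕ) : Continuous (entH n) := by
  have hsq : Continuous fun l : Fin n → ℝ => ∑ x, l x ^ 2 := by fun_prop
  unfold entH
  refine (continuous_const.mul (continuous_finsetSum _ fun x _ => ?_)).sub
    (hsq.div_const _).mul_log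
  exact (continuous_apply x |>.pow 2).mul_log

lemma continuous_objective {n : ℕ} (Q : Matrix (Fin n) (Fin n) ℝ) : Continuous (objective Q) :=
  (continuous_const.mul (continuous_id.dotProduct
    (continuous_const.matrix_mulVec continuous_id))).sub (continuous_entH n)

def nonnegSphere (ι : Type*) [Fintype ι] (r : ℝ) : Set (ι → ℝ) := {x | 0 ≤ x ∧ ∑ j, x j ^ 2 = r}

lemma isCompact_nonnegSphere (ι : Type*) [Fintype ι] (r : ℝ) : IsCompact (nonnegSphere ι r) := by
  have hclosed : IsClosed (nonnegSphere ι r) :=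
    isClosed_Ici.inter (isClosed_eq (by fun_prop) continuous_const)
  refine (isCompact_Icc (a := 0) (b := fun _ => √r)).of_isClosed_subset hclosed
    fun x ⟨hx, hxr⟩ => ⟨hx, fun j => ?_⟩
  refine (le_abs_self _).trans (abs_le_sqrt ?_)
  rw [← hxr]
  exact Finset.single_le_sum (fun i _ => sq_nonneg (x i)) (Finset.mem_univ j)

lemma IsMinOn.kkt_of_hasDerivAt_Ici {φ : ℝ → ℝ} {a d : ℝ} (hmin : IsMinOn φ (Ici 0) a)
    (ha : 0 ≤ a) (hd : HasDerivAt φ d a) : 0 ≤ d ∧ a * d = 0 := by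
  rcases ha.eq_or_lt with rfl | ha
  · refine ⟨?_, zero_mul d⟩
    have hcone : (1 : ℝ) ∈ posTangentConeAt (Ici 0) 0 :=
      mem_posTangentConeAt_of_segment_subset (by simp [segment_eq_Icc, Icc_subset_Ici_self])
    simpa using hmin.localize.hasFDerivWithinAt_nonneg hd.hasDerivWithinAt.hasFDerivWithinAt hcone
  · simp [(hmin.isLocalMin (Ici_mem_nhds ha)).hasDerivAt_eq_zero hd]

lemma IsMinOn.kkt_of_hasDerivAt_update {ι : Type*} [DecidableEq ι] {f : (ι → ℝ) → ℝ}
    {μ : ι → ℝ} (hmin : IsMinOn f {x | 0 ≤ x} μ) (hμ : 0 ≤ μ) {j : ι} {d : ℝ}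
    (hd : HasDerivAt (fun y => f (update μ j y)) d (μ j)) : 0 ≤ d ∧ μ j * d = 0 := by
  refine IsMinOn.kkt_of_hasDerivAt_Ici (fun y (hy : 0 ≤ y) => ?_) (hμ j) hd
  have hupd : 0 ≤ update μ j y := le_update_iff.2 ⟨hy, fun i _ => hμ i⟩
  simpa using hmin hupd

lemma HasDerivAt.dotProduct_mulVec {ι : Type*} [Fintype ι] {u : ℝ → ι → ℝ} {u' : ι → ℝ}
    {t : ℝ} (Q : Matrix ι ι ℝ) (hu : HasDerivAt u u' t) :
    HasDerivAt (fun s => u s ⬝ᵥ Q *ᵥ u s) (u' ⬝ᵥ Q *ᵥ u t + u t ⬝ᵥ Q *ᵥ u') t := by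
  rw [hasDerivAt_pi] at hu
  have := HasDerivAt.fun_sum (u := Finset.univ) fun i _ =>
    (hu i).fun_mul (HasDerivAt.fun_sum (u := Finset.univ) fun k _ => (hu k).const_mul (Q i k))
  simpa only [dotProduct, mulVec, Finset.sum_add_distrib] using this

lemma hasDerivAt_dotProduct_mulVec_update {ι : Type*} [Fintype ι] [DecidableEq ι]
    (Q : Matrix ι ι ℝ) (μ : ι → ℝ) (j : ι) :
    HasDerivAt (fun y => update μ j y ⬝ᵥ Q *ᵥ update μ j y) ((Q *ᵥ μ) j + (Qᵀ *ᵥ μ) j) (μ j) := by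
  convert (hasDerivAt_update μ j (μ j)).dotProduct_mulVec Q using 1
  rw [update_eq_self, single_dotProduct, dotProduct_mulVec, dotProduct_single, mulVec_transpose,
    one_mul, mul_one]

lemma hasDerivAt_sum_comp_update {ι : Type*} [Fintype ι] [DecidableEq ι] {f : ℝ → ℝ} {f' : ℝ}
    (x : ι → ℝ) (j : ι) (hf : HasDerivAt f f' (x j)) :
    HasDerivAt (fun y => ∑ i, f (update x j y i)) f' (x j) := by
  have hsplit : (fun y => ∑ i, f (update x j y i)) =
      fun y => f y + ∑ i ∈ Finset.univ \ {j}, f (x i) := funext fun y => by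
    simpa [apply_update (fun _ => f)] using
      Finset.sum_update_of_mem (Finset.mem_univ j) (fun i => f (x i)) (f y)
  rw [hsplit]
  exact hf.add_const _

lemma hasDerivAt_sq_mul_log_sq (x : ℝ) :
    HasDerivAt (fun y => y ^ 2 * log (y ^ 2)) (2 * x * log (x ^ 2) + 2 * x) x := by
  rcases eq_or_ne x 0 with rfl | hx
  · rw [hasDerivAt_iff_isLittleO_nhds_zero]
    have hlim : Tendsto (fun h : ℝ => h * log (h ^ 2)) (𝓝 0) (𝓝 0) := by
      simpa [log_pow, mul_left_comm] using (continuous_mul_log.tendsto 0).const_mul 2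
    simpa [sq, mul_assoc] using (Asymptotics.isBigO_refl (fun h : ℝ => h) (𝓝 0)).mul_isLittleO
      (Asymptotics.isLittleO_one_iff ℝ |>.2 hlim)
  · have := (hasDerivAt_mul_log (pow_ne_zero 2 hx)).comp (h := fun y : ℝ => y ^ 2) x
      (hasDerivAt_pow 2 x)
    exact this.congr_deriv (by push_cast; ring)

lemma hasDerivAt_entH_update {n : ℕ} (hn : (n : ℝ) ≠ 0) {μ : Fin n → ℝ}
    (hμ : ∑ i, μ i ^ 2 = n) (j : Fin n) :
    HasDerivAt (fun y => entH n (update μ j y)) (4 / n * (μ j * log (μ j))) (μ j) := by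
  have hS := (hasDerivAt_sum_comp_update μ j (hasDerivAt_pow 2 (μ j))).div_const n
  have hA := hasDerivAt_sum_comp_update μ j (hasDerivAt_sq_mul_log_sq (μ j))
  have hL := (hasDerivAt_mul_log one_ne_zero).comp_of_eq (μ j) hS (by simp [hμ, hn])
  refine ((hA.const_mul (1 / n : ℝ)).sub hL).congr_deriv ?_
  rw [log_pow, log_one]
  field_simp
  ring

lemma hasDerivAt_objective_update {n : ℕ} (hn : (n : ℝ) ≠ 0) {Q : Matrix (Fin n) (Fin n) ℝ}
    (hQ : Qᵀ = Q) {μ : Fin n → ℝ} (hμ : ∑ i, μ i ^ 2 = n) (j : Fin n) :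
    HasDerivAt (fun y => objective Q (update μ j y))
      (4 * (Q *ᵥ μ) j - 4 / n * (μ j * log (μ j))) (μ j) := by
  refine (((hasDerivAt_dotProduct_mulVec_update Q μ j).const_mul 2).sub
    (hasDerivAt_entH_update hn hμ j)).congr_deriv ?_
  rw [hQ]
  ring

lemma le_of_isMinOn_nonnegSphere {ι : Type*} [Fintype ι] {f : (ι → ℝ) → ℝ}
    (hf : ∀ (t : ℝ) x, f (t • x) = t ^ 2 * f x) {r : ℝ} (hr : 0 < r) {μ : ι → ℝ}
    (hmin : IsMinOn f (nonnegSphere ι r) μ) {x : ι → ℝ} (hx : 0 ≤ x) :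
    f μ / r * ∑ j, x j ^ 2 ≤ f x := by
  rcases (Finset.sum_nonneg fun j _ => sq_nonneg (x j) : 0 ≤ ∑ j, x j ^ 2).eq_or_lt with hs | hs
  · have hx0 : x = 0 := funext fun j => pow_eq_zero_iff two_ne_zero |>.1 <|
      (Finset.sum_eq_zero_iff_of_nonneg fun i _ => sq_nonneg (x i)).1 hs.symm j (Finset.mem_univ j)
    simpa [← hs, hx0] using (hf 0 0).symm.le
  · set t := √(r / ∑ j, x j ^ 2)
    have ht : t ^ 2 = r / ∑ j, x j ^ 2 := sq_sqrt (div_pos hr hs).le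
    have htx : t • x ∈ nonnegSphere ι r :=
      ⟨smul_nonneg (sqrt_nonneg _) hx, by rw [sum_sq_smul, ht, div_mul_cancel₀ _ hs.ne']⟩
    calc f μ / r * ∑ j, x j ^ 2 ≤ f (t • x) / r * ∑ j, x j ^ 2 := by gcongr; exact hmin htx
      _ = f x := by rw [hf, ht]; field_simp

lemma isMinOn_sub_of_isMinOn_nonnegSphere {ι : Type*} [Fintype ι] {f : (ι → ℝ) → ℝ}
    (hf : ∀ (t : ℝ) x, f (t • x) = t ^ 2 * f x) {r : ℝ} (hr : 0 < r) {μ : ι → ℝ}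
    (hμ : μ ∈ nonnegSphere ι r) (hmin : IsMinOn f (nonnegSphere ι r) μ) :
    IsMinOn (fun x => f x - f μ / r * ∑ j, x j ^ 2) {x | 0 ≤ x} μ := fun x hx => by
  show f μ - f μ / r * ∑ j, μ j ^ 2 ≤ f x - f μ / r * ∑ j, x j ^ 2
  rw [hμ.2, div_mul_cancel₀ _ hr.ne', sub_self, sub_nonneg]
  exact le_of_isMinOn_nonnegSphere hf hr hmin hx

-- `Real.log 0 = 0`, so `x * log x` vanishes at `x = 0`, as in the paper's convention.
def IsKKTPoint {n : ℕ} (Q : Matrix (Fin n) (Fin n) ℝ) (l ν : Fin n → ℝ) : Prop :=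
  (∀ j, 4 * (Q *ᵥ l) j - 4 / n * (l j * log (l j)) - ν j = 0) ∧
    (0 < ∑ j, l j ^ 2) ∧ ((∑ j, l j ^ 2) < n) ∧
    (∀ j, 0 ≤ l j) ∧ (∀ j, l j * ν j = 0) ∧ (∀ j, 0 ≤ ν j)

lemma stationarity_exp_smul {n : ℕ} (Q : Matrix (Fin n) (Fin n) ℝ) (η : ℝ) (μ ν : Fin n → ℝ)
    (j : Fin n) :
    4 * (Q *ᵥ (exp (η / 2) • μ)) j - 4 / n * ((exp (η / 2) • μ) j * log ((exp (η / 2) • μ) j))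
      - (exp (η / 2) • ν) j
      = exp (η / 2) * (4 * (Q *ᵥ μ) j - 4 / n * (μ j * log (μ j)) - 2 * η / n * μ j - ν j) := by
  simp only [mulVec_smul, Pi.smul_apply, smul_eq_mul, mul_log_mul, log_exp]
  ring

lemma isKKTPoint_exp_smul {n : ℕ} (hn : (0 : ℝ) < n) {Q : Matrix (Fin n) (Fin n) ℝ} {η : ℝ}
    (hη : η < 0) {μ ν : Fin n → ℝ} (hμ : μ ∈ nonnegSphere (Fin n) n)
    (hstat : ∀ j, ν j = 4 * (Q *ᵥ μ) j - 4 / n * (μ j * log (μ j)) - 2 * η / n * μ j)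
    (hν : ∀ j, 0 ≤ ν j ∧ μ j * ν j = 0) :
    IsKKTPoint Q (exp (η / 2) • μ) (exp (η / 2) • ν) := by
  have hc : exp (η / 2) ^ 2 = exp η := by rw [← exp_nat_mul]; ring_nf
  refine ⟨fun j => ?_, ?_, ?_, fun j => ?_, fun j => ?_, fun j => ?_⟩
  · rw [stationarity_exp_smul, ← hstat, sub_self, mul_zero]
  · rw [sum_sq_smul, hμ.2]; positivity
  · rw [sum_sq_smul, hμ.2, hc]; exact mul_lt_of_lt_one_left hn (exp_lt_one_iff.2 hη)
  · exact smul_nonneg (exp_pos _).le (hμ.1 j)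
  · simp only [Pi.smul_apply, smul_eq_mul]; linear_combination exp (η / 2) ^ 2 * (hν j).2
  · exact smul_nonneg (exp_pos _).le (hν j).1

theorem kkt_nonneg (n : ℕ) (hn : 1 ≤ n) (Q : Matrix (Fin n) (Fin n) ℝ) (hQ : Qᵀ = Q)
    (hno : ¬ ∃ (l ν : Fin n → ℝ),
        (∀ j, 4 * Q.mulVec l j - (4 / n : ℝ) * (l j * Real.log (l j)) - ν j = 0) ∧
        (0 < ∑ j, l j ^ 2) ∧ ((∑ j, l j ^ 2) < n) ∧
        (∀ j, 0 ≤ l j) ∧ (∀ j, l j * ν j = 0) ∧ (∀ j, 0 ≤ ν j)) :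
    ∀ l : Fin n → ℝ, (∀ j, 0 ≤ l j) → (∑ j, l j ^ 2) = 1 →
      0 ≤ 2 * (∑ j, l j * Q.mulVec l j) - entH n l := by
  intro l hl hl1
  by_contra! hneg
  have hnpos : (0 : ℝ) < n := by exact_mod_cast hn
  obtain ⟨μ, hμ, hmin⟩ := (isCompact_nonnegSphere (Fin n) n).exists_isMinOn
    ⟨1, zero_le_one, by simp⟩ (continuous_objective Q).continuousOn
  set η := objective Q μ
  have hη : η < 0 := by
    have := le_of_isMinOn_nonnegSphere (objective_smul Q) hnpos hmin hl
    rw [hl1, mul_one] at this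
    exact neg_of_div_neg_left (this.trans_lt hneg) hnpos.le
  have hlagr := isMinOn_sub_of_isMinOn_nonnegSphere (objective_smul Q) hnpos hμ hmin
  set ν := fun j => 4 * (Q *ᵥ μ) j - 4 / n * (μ j * log (μ j)) - 2 * η / n * μ j
  have hkkt (j : Fin n) : 0 ≤ ν j ∧ μ j * ν j = 0 :=
    hlagr.kkt_of_hasDerivAt_update hμ.1 <| ((hasDerivAt_objective_update hnpos.ne' hQ hμ.2 j).sub
      ((hasDerivAt_sum_comp_update μ j (hasDerivAt_pow 2 (μ j))).const_mul (η / n))).congr_deriv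
      (by simp only [ν]; ring)
  exact hno ⟨_, _, isKKTPoint_exp_smul hnpos hη hμ (fun j => rfl) hkkt⟩
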